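/- arXiv:2409.11963 — 4 statements merged into one kernel-verified Lean document; each statement's English description precedes it below -/
import Mathlib

section
/- Let 2 < p < 6, let n ≥ 0 be an integer, and let (ξ, ξ+2/p) be an interval at level n. Then ξ = n + (4/p)k for some integer k, and (ξ, ξ+2/p) intersects exactly one interval at level n+1, namely (ξ+1−4/p, ξ+1−2/p). Moreover, when p = 2 or p = 6, the interval (ξ, ξ+2/p) at level n intersects no interval at level n+1 (the endpoint of an interval at level n is an endpoint of an interval at level n+1). -/
/-!
The level-`n` set `{y | 0 < sin (p/2 · π · (y - n))}` is the disjoint union of the open intervals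
`(n + 4k/p, n + 4k/p + 2/p)`, `k ∈ ℤ`, whose endpoints are zeros of the sine; hence these are its
connected components. A level-`(n+1)` interval therefore starts at `η = ξ + 1 - 4d/p` for an
integer `d`, and two intervals of length `2/p` meet iff `|ξ - η| < 2/p`, i.e. `|4d - p| < 2`.
For `2 < p < 6` this forces `d = 1`. For `p = 4j + 2` (so `p = 2` or `p = 6`) it would force
`0 < d - j < 1`, and instead `ξ - 2/p` and `ξ + 2/p` start level-`(n+1)` intervals.
-/

open MeasureTheory Real Set

/-- `(ξ, ξ + 2/p)` is an *interval at level `n`*, i.e. a connected component of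
`{x : ℝ | sin ((p/2) π (x - n)) > 0}`. -/
def IntervalAtLevel (p : ℝ) (n : ℕ) (ξ : ℝ) : Prop :=
  ∃ x ∈ {y : ℝ | 0 < Real.sin (p / 2 * π * (y - n))},
    connectedComponentIn {y : ℝ | 0 < Real.sin (p / 2 * π * (y - n))} x
      = Set.Ioo ξ (ξ + 2 / p)

theorem sin_pos_iff_exists_int {θ : ℝ} :
    0 < sin θ ↔ ∃ k : ℤ, 2 * k * π < θ ∧ θ < 2 * k * π + π := by
  constructor
  · intro h
    set k := ⌊θ / (2 * π)⌋
    have hk₀ := Int.sub_floor_div_mul_nonneg θ two_pi_pos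
    have hk₁ := Int.sub_floor_div_mul_lt θ two_pi_pos
    have hsin : sin (θ - k * (2 * π)) = sin θ := sin_sub_int_mul_two_pi θ k
    refine ⟨k, ?_, ?_⟩
    · by_contra! hle
      have := sin_nonpos_of_nonpos_of_neg_pi_le (x := θ - k * (2 * π)) (by linarith)
        (by linarith [pi_pos])
      linarith
    · by_contra! hle
      have := sin_nonpos_of_nonpos_of_neg_pi_le (x := θ - k * (2 * π) - 2 * π) (by linarith)
        (by linarith)
      rw [sin_sub_two_pi, hsin] at this
      linarith
  · rintro ⟨k, h₁, h₂⟩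
    rw [← sin_sub_int_mul_two_pi θ k]
    exact sin_pos_of_pos_of_lt_pi (by linarith) (by linarith)

theorem sin_pos_iff_mem_Ioo {p : ℝ} (hp : 0 < p) (a y : ℝ) :
    0 < sin (p / 2 * π * (y - a)) ↔ ∃ k : ℤ, y ∈ Ioo (a + 4 / p * k) (a + 4 / p * k + 2 / p) := by
  have hc : 0 < p / 2 * π := by positivity
  rw [sin_pos_iff_exists_int]
  refine exists_congr fun k => ?_
  have h₁ : p / 2 * π * (a + 4 / p * k - a) = 2 * k * π := by field_simp; ring
  have h₂ : p / 2 * π * (a + 4 / p * k + 2 / p - a) = 2 * k * π + π := by field_simp; ring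
  rw [← h₂, ← h₁, mul_lt_mul_iff_right₀ hc, mul_lt_mul_iff_right₀ hc]
  simp only [mem_Ioo, sub_lt_sub_iff_right]

theorem connectedComponentIn_eq_Ioo {α : Type*} [ConditionallyCompleteLinearOrder α]
    [TopologicalSpace α] [OrderTopology α] [DenselyOrdered α] {s : Set α} {a b x : α}
    (hsub : Ioo a b ⊆ s) (ha : a ∉ s) (hb : b ∉ s) (hx : x ∈ Ioo a b) :
    connectedComponentIn s x = Ioo a b := by
  have hxs : x ∈ connectedComponentIn s x := mem_connectedComponentIn (hsub hx)
  have hoc := (isPreconnected_connectedComponentIn (F := s) (x := x)).ordConnected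
  refine (isPreconnected_Ioo.subset_connectedComponentIn hx hsub).antisymm' fun y hy => ⟨?_, ?_⟩
  · by_contra! hle
    exact ha (connectedComponentIn_subset s x (hoc.out hy hxs ⟨hle, hx.1.le⟩))
  · by_contra! hle
    exact hb (connectedComponentIn_subset s x (hoc.out hxs hy ⟨hx.2.le, hle⟩))

theorem Ioo_inter_Ioo_add_nonempty_iff {α : Type*} [AddCommGroup α] [LinearOrder α]
    [IsOrderedAddMonoid α] [DenselyOrdered α] {a b l : α} :
    (Ioo a (a + l) ∩ Ioo b (b + l)).Nonempty ↔ |a - b| < l := by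
  rw [Ioo_inter_Ioo, nonempty_Ioo, abs_sub_lt_iff, max_lt_iff, lt_min_iff, lt_min_iff,
    sub_lt_iff_lt_add', sub_lt_iff_lt_add']
  constructor
  · rintro ⟨⟨-, h₁⟩, h₂, -⟩
    exact ⟨h₁, h₂⟩
  · rintro ⟨h₁, h₂⟩
    have hl : 0 < l := lt_of_not_ge fun hl =>
      (h₁.trans_le (add_le_of_nonpos_right hl)).asymm (h₂.trans_le (add_le_of_nonpos_right hl))
    exact ⟨⟨lt_add_of_pos_right a hl, h₁⟩, h₂, lt_add_of_pos_right b hl⟩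

theorem connectedComponentIn_sin_pos {p : ℝ} (hp : 0 < p) (a : ℝ) (k : ℤ) {x : ℝ}
    (hx : x ∈ Ioo (a + 4 / p * k) (a + 4 / p * k + 2 / p)) :
    connectedComponentIn {y : ℝ | 0 < sin (p / 2 * π * (y - a))} x
      = Ioo (a + 4 / p * k) (a + 4 / p * k + 2 / p) := by
  refine connectedComponentIn_eq_Ioo (fun y hy => (sin_pos_iff_mem_Ioo hp a y).2 ⟨k, hy⟩)
    ?_ ?_ hx <;> simp only [mem_ofPred_eq, not_lt]
  · have h : p / 2 * π * (a + 4 / p * k - a) = (2 * k : ℤ) * π := by push_cast; field_simp; ring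
    rw [h, sin_int_mul_pi]
  · have h : p / 2 * π * (a + 4 / p * k + 2 / p - a) = (2 * k + 1 : ℤ) * π := by
      push_cast; field_simp; ring
    rw [h, sin_int_mul_pi]

theorem intervalAtLevel_iff {p : ℝ} (hp : 0 < p) {n : ℕ} {ξ : ℝ} :
    IntervalAtLevel p n ξ ↔ ∃ k : ℤ, ξ = n + 4 / p * k := by
  have hlen : 0 < 2 / p := by positivity
  constructor
  · rintro ⟨x, hx, hcomp⟩
    obtain ⟨k, hxk⟩ := (sin_pos_iff_mem_Ioo hp n x).1 hx
    rw [connectedComponentIn_sin_pos hp n k hxk] at hcomp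
    exact ⟨k, (isGLB_Ioo (by linarith)).unique (hcomp ▸ isGLB_Ioo (by linarith))⟩
  · rintro ⟨k, rfl⟩
    have hx : n + 4 / p * k + 1 / p ∈ Ioo (n + 4 / p * k : ℝ) (n + 4 / p * k + 2 / p) :=
      ⟨by linarith [one_div_pos.2 hp], by linarith [div_lt_div_of_pos_right one_lt_two hp]⟩
    exact ⟨_, (sin_pos_iff_mem_Ioo hp n _).2 ⟨k, hx⟩, connectedComponentIn_sin_pos hp n k hx⟩

theorem Ioo_inter_Ioo_sub_nonempty_iff {p : ℝ} (hp : 0 < p) (ξ d : ℝ) :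
    (Ioo ξ (ξ + 2 / p) ∩ Ioo (ξ + 1 - 4 / p * d) (ξ + 1 - 4 / p * d + 2 / p)).Nonempty ↔
      |4 * d - p| < 2 := by
  have h : ξ - (ξ + 1 - 4 / p * d) = (4 * d - p) / p := by field_simp; ring
  rw [Ioo_inter_Ioo_add_nonempty_iff, h, abs_div, abs_of_pos hp, div_lt_div_iff_of_pos_right hp]

theorem IntervalAtLevel.exists_int_of_inter_nonempty {p : ℝ} (hp : 0 < p) {n : ℕ} {ξ η : ℝ}
    (hξ : IntervalAtLevel p n ξ) (hη : IntervalAtLevel p (n + 1) η)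
    (h : (Ioo ξ (ξ + 2 / p) ∩ Ioo η (η + 2 / p)).Nonempty) :
    ∃ d : ℤ, η = ξ + 1 - 4 / p * d ∧ |4 * d - p| < 2 := by
  obtain ⟨k, rfl⟩ := (intervalAtLevel_iff hp).1 hξ
  obtain ⟨m, rfl⟩ := (intervalAtLevel_iff hp).1 hη
  have hstart : (n + 1 : ℕ) + 4 / p * m = n + 4 / p * k + 1 - 4 / p * (k - m : ℤ) := by
    push_cast; ring
  rw [hstart] at h ⊢
  exact ⟨k - m, rfl, (Ioo_inter_Ioo_sub_nonempty_iff hp _ _).1 h⟩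

theorem intervalAtLevel_succ_sub_add {p : ℝ} (hp : 0 < p) {n : ℕ} {ξ : ℝ}
    (hξ : IntervalAtLevel p n ξ) {j : ℤ} (hj : p = 4 * j + 2) :
    IntervalAtLevel p (n + 1) (ξ - 2 / p) ∧ IntervalAtLevel p (n + 1) (ξ + 2 / p) := by
  obtain ⟨k, rfl⟩ := (intervalAtLevel_iff hp).1 hξ
  refine ⟨(intervalAtLevel_iff hp).2 ⟨k - j - 1, ?_⟩, (intervalAtLevel_iff hp).2 ⟨k - j, ?_⟩⟩ <;>
    · push_cast; field_simp; linear_combination -hj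

theorem eq_one_of_abs_four_mul_sub_lt_two {p : ℝ} (hp2 : 2 < p) (hp6 : p < 6) {d : ℤ}
    (h : |4 * d - p| < 2) : d = 1 := by
  obtain ⟨h₁, h₂⟩ := abs_lt.1 h
  have hd₀ : 0 < d := by exact_mod_cast (show (0 : ℝ) < d by linarith)
  have hd₂ : d < 2 := by exact_mod_cast (show (d : ℝ) < 2 by linarith)
  omega

theorem two_le_abs_four_mul_sub_four_mul_add_two (d j : ℤ) :
    2 ≤ |4 * (d : ℝ) - (4 * j + 2)| := by
  have h : 4 * (d : ℝ) - (4 * j + 2) = ((4 * d - 4 * j - 2 : ℤ) : ℝ) := by push_cast; ring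
  rw [h, ← Int.cast_abs, ← Int.cast_ofNat, Int.cast_le, le_abs]
  omega

theorem stmt8_general (p : ℝ) (n : ℕ) (ξ : ℝ)
    (hI : IntervalAtLevel p n ξ) :
    (2 < p → p < 6 →
      ((∃ k : ℤ, ξ = (n : ℝ) + (4 / p) * k) ∧
        IntervalAtLevel p (n + 1) (ξ + 1 - 4 / p) ∧
        (Set.Ioo ξ (ξ + 2 / p) ∩ Set.Ioo (ξ + 1 - 4 / p) (ξ + 1 - 2 / p)).Nonempty ∧
        ∀ η : ℝ, IntervalAtLevel p (n + 1) η →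
          (Set.Ioo ξ (ξ + 2 / p) ∩ Set.Ioo η (η + 2 / p)).Nonempty →
            η = ξ + 1 - 4 / p)) ∧
    ((p = 2 ∨ p = 6) →
      ((∀ η : ℝ, IntervalAtLevel p (n + 1) η →
          Set.Ioo ξ (ξ + 2 / p) ∩ Set.Ioo η (η + 2 / p) = ∅) ∧
        ∀ e : ℝ, (e = ξ ∨ e = ξ + 2 / p) →
          ∃ η : ℝ, IntervalAtLevel p (n + 1) η ∧ (e = η ∨ e = η + 2 / p))) := by
  refine ⟨fun hp2 hp6 => ?_, fun hp26 => ?_⟩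
  · have hp : 0 < p := by linarith
    obtain ⟨k, hk⟩ := (intervalAtLevel_iff hp).1 hI
    refine ⟨⟨k, hk⟩, (intervalAtLevel_iff hp).2 ⟨k - 1, by rw [hk]; push_cast; ring⟩, ?_, ?_⟩
    · convert (Ioo_inter_Ioo_sub_nonempty_iff hp ξ 1).2 (abs_lt.2 ⟨by linarith, by linarith⟩)
        using 3 <;> ring
    · intro η hη h
      obtain ⟨d, rfl, hd⟩ := hI.exists_int_of_inter_nonempty hp hη h
      simp [eq_one_of_abs_four_mul_sub_lt_two hp2 hp6 hd]
  · obtain ⟨j, hj⟩ : ∃ j : ℤ, p = 4 * j + 2 := hp26.elim (fun h => ⟨0, by simp [h]⟩)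
      fun h => ⟨1, by norm_num [h]⟩
    have hp : 0 < p := by rcases hp26 with rfl | rfl <;> norm_num
    obtain ⟨hleft, hright⟩ := intervalAtLevel_succ_sub_add hp hI hj
    refine ⟨fun η hη => not_nonempty_iff_eq_empty.1 fun h => ?_, ?_⟩
    · obtain ⟨d, -, hd⟩ := hI.exists_int_of_inter_nonempty hp hη h
      exact (two_le_abs_four_mul_sub_four_mul_add_two d j).not_gt (hj ▸ hd)
    · rintro e (rfl | rfl)
      · exact ⟨_, hleft, Or.inr (sub_add_cancel _ _).symm⟩
      · exact ⟨_, hright, Or.inl rfl⟩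

theorem stmt8 (p : ℝ) (n : ℕ) (ξ : ℝ) (hp2 : 2 ≤ p) (hp6 : p ≤ 6)
    (hI : IntervalAtLevel p n ξ) :
    (2 < p → p < 6 →
      ((∃ k : ℤ, ξ = (n : ℝ) + (4 / p) * k) ∧
        IntervalAtLevel p (n + 1) (ξ + 1 - 4 / p) ∧
        (Set.Ioo ξ (ξ + 2 / p) ∩ Set.Ioo (ξ + 1 - 4 / p) (ξ + 1 - 2 / p)).Nonempty ∧
        ∀ η : ℝ, IntervalAtLevel p (n + 1) η →
          (Set.Ioo ξ (ξ + 2 / p) ∩ Set.Ioo η (η + 2 / p)).Nonempty →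
            η = ξ + 1 - 4 / p)) ∧
    ((p = 2 ∨ p = 6) →
      ((∀ η : ℝ, IntervalAtLevel p (n + 1) η →
          Set.Ioo ξ (ξ + 2 / p) ∩ Set.Ioo η (η + 2 / p) = ∅) ∧
        ∀ e : ℝ, (e = ξ ∨ e = ξ + 2 / p) →
          ∃ η : ℝ, IntervalAtLevel p (n + 1) η ∧ (e = η ∨ e = η + 2 / p))) :=
  stmt8_general p n ξ hI
end

section
/- Let 2 ≤ p ≤ 4, let (ξ, ξ+2/p) be an interval at level n with ξ + 1 − 4/p > 0, and let t satisfy ξ + 1 − 4/p ≤ t ≤ ξ + 1. Then S(t) ≤ S(ξ + 1 − 4/p), i.e. S is maximized at t = ξ + 1 − 4/p. -/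
/-! Write `c = ξ + 1 - 4/p`, `d = ξ + 1 - 2/p` and `s = 4/p - 1 ≥ 0`, so that `c + s = ξ` and
`d + s = ξ + 2/p`. Translating by `s` shifts the phase of `sin² (pπ/2 (x - n))` by exactly `2π`
relative to `sin² (pπ/2 (x - n - 1))` and only shrinks the weight `1/x²`, so the first integral
of `S(t)`, which lives on `(ξ, min t d + s)`, is at most the integral of the second integrand over
`(c, min t d)`: precisely the piece of the second integral that `S(t)` loses against `S(c)`. -/

open MeasureTheory Real Set

/-- The quantity `S(t)` attached to the interval `(ξ, ξ + 2/p)` at level `n`. -/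
noncomputable def S (p : ℝ) (n : ℕ) (ξ t : ℝ) : ℝ :=
  (∫ x in ξ..(ξ + 2 / p),
    (Set.Ioo ξ t).indicator
      (fun y => Real.sin (p / 2 * π * (y - n)) ^ 2 / (π ^ 2 * y ^ 2)) x) +
  ∫ x in (ξ + 1 - 4 / p)..(ξ + 1 - 2 / p),
    (Set.Ioo t (ξ + 1 - 2 / p)).indicator
      (fun y => Real.sin (p / 2 * π * (y - ((n : ℝ) + 1))) ^ 2 / (π ^ 2 * y ^ 2)) x

lemma intervalIntegral_indicator_Ioo (f : ℝ → ℝ) {a b : ℝ} (l u : ℝ) (hab : a ≤ b) :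
    ∫ x in a..b, (Ioo l u).indicator f x = ∫ x in Ioo a b ∩ Ioo l u, f x := by
  rw [intervalIntegral.integral_of_le hab, integral_Ioc_eq_integral_Ioo,
    setIntegral_indicator measurableSet_Ioo]

lemma setIntegral_Ioo_add_right (f : ℝ → ℝ) (a b s : ℝ) :
    ∫ x in Ioo (a + s) (b + s), f x = ∫ x in Ioo a b, f (x + s) := by
  rw [← (measurePreserving_add_right volume s).setIntegral_preimage_emb
    (measurableEmbedding_addRight s), preimage_add_const_Ioo, add_sub_cancel_right,
    add_sub_cancel_right]

lemma IntegrableOn.comp_add_right_Ioo {f : ℝ → ℝ} {a b s : ℝ}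
    (hf : IntegrableOn f (Ioo (a + s) (b + s))) : IntegrableOn (fun x => f (x + s)) (Ioo a b) := by
  have h := ((measurePreserving_add_right volume s).integrableOn_comp_preimage
    (measurableEmbedding_addRight s)).mpr hf
  rwa [preimage_add_const_Ioo, add_sub_cancel_right, add_sub_cancel_right] at h

lemma setIntegral_Ioo_add_setIntegral_Ioo {f : ℝ → ℝ} {a b c : ℝ} (hab : a ≤ b) (hbc : b ≤ c)
    (hf : IntegrableOn f (Ioc a c)) :
    (∫ x in Ioo a b, f x) + ∫ x in Ioo b c, f x = ∫ x in Ioo a c, f x := by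
  simp only [← integral_Ioc_eq_integral_Ioo]
  rw [← Ioc_union_Ioc_eq_Ioc hab hbc] at hf ⊢
  exact (setIntegral_union (Ioc_disjoint_Ioc_of_le le_rfl) measurableSet_Ioc
    (hf.mono_set subset_union_left) (hf.mono_set subset_union_right)).symm

noncomputable def sinSqDivSq (k v x : ℝ) : ℝ :=
  Real.sin (k * (x - v)) ^ 2 / (π ^ 2 * x ^ 2)

lemma sinSqDivSq_nonneg (k v x : ℝ) : 0 ≤ sinSqDivSq k v x := by
  unfold sinSqDivSq; positivity

lemma integrableOn_sinSqDivSq_Icc (k v : ℝ) {a : ℝ} (b : ℝ) (ha : 0 < a) :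
    IntegrableOn (sinSqDivSq k v) (Icc a b) := by
  refine ContinuousOn.integrableOn_Icc ?_
  refine ContinuousOn.div (by fun_prop) (by fun_prop) fun x hx => ?_
  have : 0 < x := ha.trans_le hx.1
  positivity

lemma sinSqDivSq_add_le {k s : ℝ} (v : ℝ) {y : ℝ} (hk : k * (s + 1) = 2 * π) (hs : 0 ≤ s)
    (hy : 0 < y) : sinSqDivSq k v (y + s) ≤ sinSqDivSq k (v + 1) y := by
  have hphase : k * (y + s - v) = k * (y - (v + 1)) + 2 * π := by linear_combination hk
  unfold sinSqDivSq
  rw [hphase, sin_add_two_pi]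
  gcongr
  linarith

lemma setIntegral_sinSqDivSq_add_le {k s : ℝ} (v : ℝ) {a : ℝ} (b : ℝ)
    (hk : k * (s + 1) = 2 * π) (hs : 0 ≤ s) (ha : 0 < a) :
    ∫ x in Ioo (a + s) (b + s), sinSqDivSq k v x ≤ ∫ x in Ioo a b, sinSqDivSq k (v + 1) x := by
  rw [setIntegral_Ioo_add_right]
  have has : 0 < a + s := by linarith
  exact setIntegral_mono_on (IntegrableOn.comp_add_right_Ioo
    ((integrableOn_sinSqDivSq_Icc k v (b + s) has).mono_set Ioo_subset_Icc_self))
    ((integrableOn_sinSqDivSq_Icc k (v + 1) b ha).mono_set Ioo_subset_Icc_self) measurableSet_Ioo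
    fun y hy => sinSqDivSq_add_le v hk hs (ha.trans hy.1)

lemma setIntegral_sinSqDivSq_mono (k v : ℝ) {s : Set ℝ} {a b : ℝ} (ha : 0 < a)
    (hs : s ⊆ Ioo a b) : ∫ x in s, sinSqDivSq k v x ≤ ∫ x in Ioo a b, sinSqDivSq k v x :=
  setIntegral_mono_set ((integrableOn_sinSqDivSq_Icc k v b ha).mono_set Ioo_subset_Icc_self)
    (.of_forall (sinSqDivSq_nonneg k v)) hs.eventuallyLE

lemma S_eq_setIntegral {p : ℝ} (n : ℕ) (ξ t : ℝ) (hp : 0 < p) :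
    S p n ξ t = (∫ x in Ioo ξ (ξ + 2 / p) ∩ Ioo ξ t, sinSqDivSq (p / 2 * π) n x) +
      ∫ x in Ioo (ξ + 1 - 4 / p) (ξ + 1 - 2 / p) ∩ Ioo t (ξ + 1 - 2 / p),
        sinSqDivSq (p / 2 * π) (n + 1) x := by
  have h2 : 0 < 2 / p := by positivity
  have h24 : 2 / p ≤ 4 / p := by gcongr; norm_num
  exact congrArg₂ (· + ·) (intervalIntegral_indicator_Ioo _ _ _ (by linarith))
    (intervalIntegral_indicator_Ioo _ _ _ (by linarith))

theorem stmt9_general (p : ℝ) (n : ℕ) (ξ t : ℝ) (hp2 : 2 ≤ p) (hp4 : p ≤ 4)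
    (hpos : 0 < ξ + 1 - 4 / p)
    (ht1 : ξ + 1 - 4 / p ≤ t) :
    S p n ξ t ≤ S p n ξ (ξ + 1 - 4 / p) := by
  have hp : 0 < p := by linarith
  set c := ξ + 1 - 4 / p
  set d := ξ + 1 - 2 / p
  set s := 4 / p - 1
  set m := min t d
  have hs : 0 ≤ s := by rw [sub_nonneg, le_div_iff₀ hp]; linarith
  have hk : p / 2 * π * (s + 1) = 2 * π := by simp only [s]; field_simp; ring
  have hcs : c + s = ξ := by ring
  have hcd : c ≤ d := by simp only [c, d]; gcongr; norm_num
  have hcm : c ≤ m := le_min ht1 hcd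
  have hS_c : S p n ξ c = ∫ x in Ioo c d, sinSqDivSq (p / 2 * π) (n + 1) x := by
    rw [S_eq_setIntegral n ξ c hp, inter_self, eq_empty_of_subset_empty
      (inter_subset_right.trans (Ioo_eq_empty (by linarith)).subset), setIntegral_empty, zero_add]
  calc S p n ξ t
      ≤ (∫ x in Ioo (c + s) (m + s), sinSqDivSq (p / 2 * π) n x) +
          ∫ x in Ioo m d, sinSqDivSq (p / 2 * π) (n + 1) x := by
        rw [S_eq_setIntegral n ξ t hp, hcs]
        refine add_le_add (setIntegral_sinSqDivSq_mono _ _ (by linarith) ?_)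
          (setIntegral_sinSqDivSq_mono _ _ (by linarith) ?_)
        · have hds : d + s = ξ + 2 / p := by ring
          rintro x ⟨⟨hξx, hxb⟩, -, hxt⟩
          exact ⟨hξx, (lt_min (by linarith) (by linarith)).trans_eq (min_add_add_right t d s)⟩
        · exact fun x hx => ⟨(min_le_left t d).trans_lt hx.2.1, hx.2.2⟩
    _ ≤ (∫ x in Ioo c m, sinSqDivSq (p / 2 * π) (n + 1) x) +
          ∫ x in Ioo m d, sinSqDivSq (p / 2 * π) (n + 1) x :=
        add_le_add_left (setIntegral_sinSqDivSq_add_le _ _ hk hs hpos) _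
    _ = S p n ξ c := by
        rw [setIntegral_Ioo_add_setIntegral_Ioo hcm (min_le_right t d)
          ((integrableOn_sinSqDivSq_Icc _ _ d hpos).mono_set Ioc_subset_Icc_self), hS_c]

theorem stmt9 (p : ℝ) (n : ℕ) (ξ t : ℝ) (hp2 : 2 ≤ p) (hp4 : p ≤ 4)
    (hI : IntervalAtLevel p n ξ) (hpos : 0 < ξ + 1 - 4 / p)
    (ht1 : ξ + 1 - 4 / p ≤ t) (ht2 : t ≤ ξ + 1) :
    S p n ξ t ≤ S p n ξ (ξ + 1 - 4 / p) :=
  stmt9_general p n ξ t hp2 hp4 hpos ht1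
end

section
/- Let 2 ≤ p ≤ 4, let (ξ, ξ+2/p) be an interval at level n with ξ + 1 − 4/p > 0, and set m_ξ = ξ + 1/2 − 1/p. Then S(t₂) ≤ S(t₁) whenever ξ+1−4/p ≤ t₁ ≤ t₂ ≤ m_ξ; S(t₁) ≤ S(t₂) whenever m_ξ ≤ t₁ ≤ t₂ ≤ ξ+2/p; and S(t₁) = S(t₂) whenever ξ+2/p ≤ t₁ ≤ t₂ ≤ ξ+1. -/
/-!
Put `a = ξ + 1 - 4/p`, `b = ξ + 1 - 2/p`, `c = ξ + 2/p`, so that `a ≤ ξ ≤ m_ξ ≤ b ≤ c`.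
Swapping the indicator with the integration bounds gives
`S t₂ - S t₁ = ∫ t₁..t₂, (𝟙_(ξ,c) w_n - 𝟙_(a,b) w_{n+1})`, where `w_c` is the weight
`sin² ((p/2) π (x - c)) / (π² x²)`. Since `ξ ∈ n - (4/p) ℤ`, the two weights are
`sin² (ω s)` and `sin² (ω (s - 1)) = sin² (ω - π - ω s)` over `π² x²`, with `s = x - ξ`
and `ω = pπ/2`; the two sine arguments add up to `ω - π ≤ π`, so the first is the smaller
one exactly when `s ≤ 1/2 - 1/p`. Hence the density is `≤ 0` on `(a, m_ξ)`, `≥ 0` on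
`(m_ξ, c)` and `0` beyond `c`.
-/

open MeasureTheory Real Set

noncomputable def sinSqWeight (p c y : ℝ) : ℝ :=
  Real.sin (p / 2 * π * (y - c)) ^ 2 / (π ^ 2 * y ^ 2)

theorem connectedComponentIn_eq_Ioo_endpoints_notMem {U : Set ℝ} {x a b : ℝ} (hx : x ∈ U)
    (h : connectedComponentIn U x = Ioo a b) : a ∉ U ∧ b ∉ U := by
  have hxab : x ∈ Ioo a b := h ▸ mem_connectedComponentIn hx
  have hsub : Ioo a b ⊆ U := h ▸ connectedComponentIn_subset U x
  constructor
  · intro ha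
    have hIco : Ico a b ⊆ U := fun y hy =>
      hy.1.eq_or_lt.elim (fun hay => hay ▸ ha) fun hay => hsub ⟨hay, hy.2⟩
    have := isPreconnected_Ico.subset_connectedComponentIn ⟨hxab.1.le, hxab.2⟩ hIco
    rw [h] at this
    exact (this ⟨le_rfl, hxab.1.trans hxab.2⟩).1.false
  · intro hb
    have hIoc : Ioc a b ⊆ U := fun y hy =>
      hy.2.eq_or_lt.elim (fun hyb => hyb ▸ hb) fun hyb => hsub ⟨hy.1, hyb⟩
    have := isPreconnected_Ioc.subset_connectedComponentIn ⟨hxab.1, hxab.2.le⟩ hIoc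
    rw [h] at this
    exact (this ⟨hxab.1.trans hxab.2, le_rfl⟩).2.false

/-- Equivalently `ξ ∈ n - (4/p) ℤ`: the sine vanishes at both ends and is positive at the
midpoint `ξ + 1/p`. -/
theorem IntervalAtLevel.cos_eq_one {p ξ : ℝ} {n : ℕ} (hI : IntervalAtLevel p n ξ) (hp : 0 < p) :
    cos (p / 2 * π * (ξ - n)) = 1 := by
  obtain ⟨x, hx, hcomp⟩ := hI
  obtain ⟨hleft, hright⟩ := connectedComponentIn_eq_Ioo_endpoints_notMem hx hcomp
  have hsub : Ioo ξ (ξ + 2 / p) ⊆ {y : ℝ | 0 < sin (p / 2 * π * (y - n))} :=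
    hcomp ▸ connectedComponentIn_subset _ x
  have hmid := hsub (show ξ + 1 / p ∈ Ioo ξ (ξ + 2 / p) by
    constructor <;> linarith [one_div_pos.2 hp, show 2 / p = 1 / p + 1 / p by ring])
  set θ := p / 2 * π * (ξ - n)
  have hright' : p / 2 * π * (ξ + 2 / p - n) = θ + π := by field_simp; ring
  have hmid' : p / 2 * π * (ξ + 1 / p - n) = θ + π / 2 := by field_simp; ring
  simp only [mem_ofPred_eq, not_lt, hright', hmid', sin_add_pi, sin_add_pi_div_two]
    at hleft hright hmid
  nlinarith [sin_sq_add_cos_sq θ]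

theorem sinSqWeight_eq_of_cos_eq_one {p c ξ : ℝ} (h : cos (p / 2 * π * (ξ - c)) = 1) (d : ℝ) :
    sinSqWeight p (c + d) = sinSqWeight p (ξ + d) := by
  obtain ⟨k, hk⟩ := (cos_eq_one_iff _).1 h
  funext y
  have : p / 2 * π * (y - (c + d)) = p / 2 * π * (y - (ξ + d)) + k * (2 * π) := by
    rw [hk]; ring
  rw [sinSqWeight, this, sin_add_int_mul_two_pi, sinSqWeight]

theorem sin_sq_le_sin_sq_of_add_le_pi {u w : ℝ} (hu : 0 ≤ u) (huw : u ≤ w) (h : u + w ≤ π) :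
    sin u ^ 2 ≤ sin w ^ 2 := by
  have h1 : 0 ≤ sin ((w - u) / 2) := sin_nonneg_of_nonneg_of_le_pi (by linarith) (by linarith)
  have h2 : 0 ≤ cos ((w + u) / 2) := cos_nonneg_of_mem_Icc ⟨by linarith [pi_pos], by linarith⟩
  have h3 : 0 ≤ sin u := sin_nonneg_of_nonneg_of_le_pi hu (by linarith)
  have h4 : sin u ≤ sin w := by nlinarith [sin_sub_sin w u]
  nlinarith

theorem sin_mul_sub_one (ω s : ℝ) : sin (ω * (s - 1)) = sin (ω - π - ω * s) := by
  rw [show ω * (s - 1) = -((ω - π - ω * s) + π) by ring, sin_neg, sin_add_pi, neg_neg]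

theorem sin_sq_le_sin_sq_sub_one {p s : ℝ} (hp2 : 2 ≤ p) (hp4 : p ≤ 4) (h0 : 0 ≤ s)
    (h1 : s ≤ 1 / 2 - 1 / p) :
    sin (p / 2 * π * s) ^ 2 ≤ sin (p / 2 * π * (s - 1)) ^ 2 := by
  rw [sin_mul_sub_one]
  have hps : p * s ≤ p / 2 - 1 := by
    have := mul_le_mul_of_nonneg_left h1 (by linarith : (0 : ℝ) ≤ p)
    rwa [mul_sub, mul_one_div_cancel (by linarith), ← div_eq_mul_one_div] at this
  apply sin_sq_le_sin_sq_of_add_le_pi (by positivity) <;> nlinarith [pi_pos]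

theorem sin_sq_sub_one_le_sin_sq {p s : ℝ} (hp2 : 2 ≤ p) (hp4 : p ≤ 4) (h0 : 1 / 2 - 1 / p ≤ s)
    (h1 : s ≤ 1 - 2 / p) :
    sin (p / 2 * π * (s - 1)) ^ 2 ≤ sin (p / 2 * π * s) ^ 2 := by
  rw [sin_mul_sub_one]
  have hp : (0 : ℝ) < p := by linarith
  have hps₀ : p / 2 - 1 ≤ p * s := by
    have := mul_le_mul_of_nonneg_left h0 hp.le
    rwa [mul_sub, mul_one_div_cancel hp.ne', ← div_eq_mul_one_div] at this
  have hps₁ : p * s ≤ p - 2 := by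
    have := mul_le_mul_of_nonneg_left h1 hp.le
    rwa [mul_sub, mul_one, mul_div_cancel₀ _ hp.ne'] at this
  apply sin_sq_le_sin_sq_of_add_le_pi <;> nlinarith [pi_pos]

theorem sinSqWeight_le_sinSqWeight_add_one {p ξ y : ℝ} (hp2 : 2 ≤ p) (hp4 : p ≤ 4) (h0 : ξ ≤ y)
    (h1 : y ≤ ξ + 1 / 2 - 1 / p) : sinSqWeight p ξ y ≤ sinSqWeight p (ξ + 1) y := by
  have := sin_sq_le_sin_sq_sub_one (s := y - ξ) hp2 hp4 (by linarith) (by linarith)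
  rw [sub_sub] at this
  exact div_le_div_of_nonneg_right this (by positivity)

theorem sinSqWeight_add_one_le_sinSqWeight {p ξ y : ℝ} (hp2 : 2 ≤ p) (hp4 : p ≤ 4)
    (h0 : ξ + 1 / 2 - 1 / p ≤ y) (h1 : y ≤ ξ + 1 - 2 / p) :
    sinSqWeight p (ξ + 1) y ≤ sinSqWeight p ξ y := by
  have := sin_sq_sub_one_le_sin_sq (s := y - ξ) hp2 hp4 (by linarith) (by linarith)
  rw [sub_sub] at this
  exact div_le_div_of_nonneg_right this (by positivity)

theorem integrable_indicator_Ioo_sinSqWeight {p c u : ℝ} (hu : 0 < u) (v : ℝ) :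
    Integrable ((Ioo u v).indicator (sinSqWeight p c)) := by
  refine (integrable_indicator_iff measurableSet_Ioo).2 <|
    ContinuousOn.integrableOn_Icc ?_ |>.mono_set Ioo_subset_Icc_self
  refine ContinuousOn.div (by fun_prop) (by fun_prop) fun y hy => ?_
  have := hu.trans_le hy.1
  positivity

namespace intervalIntegral

theorem integral_indicator_Ioo_comm (f : ℝ → ℝ) {u v s t : ℝ} (huv : u ≤ v) (hst : s ≤ t) :
    ∫ x in u..v, (Ioo s t).indicator f x = ∫ x in s..t, (Ioo u v).indicator f x := by
  rw [integral_of_le huv, integral_of_le hst, integral_Ioc_eq_integral_Ioo,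
    integral_Ioc_eq_integral_Ioo, setIntegral_indicator measurableSet_Ioo,
    setIntegral_indicator measurableSet_Ioo, inter_comm]

theorem integral_indicator_Ioo_left (f : ℝ → ℝ) {u v : ℝ} (huv : u ≤ v) (t : ℝ) :
    ∫ x in u..v, (Ioo u t).indicator f x = ∫ x in u..t, (Ioo u v).indicator f x := by
  rcases le_total u t with hut | htu
  · exact integral_indicator_Ioo_comm f huv hut
  rw [Ioo_eq_empty htu.not_gt, indicator_empty, integral_zero]
  refine (integral_zero_ae (ae_of_all _ fun x hx => indicator_of_notMem ?_ _)).symm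
  rw [uIoc_of_ge htu] at hx
  exact fun h => h.1.not_ge hx.2

theorem integral_indicator_Ioo_right (f : ℝ → ℝ) {u v : ℝ} (huv : u ≤ v) (t : ℝ) :
    ∫ x in u..v, (Ioo t v).indicator f x = ∫ x in t..v, (Ioo u v).indicator f x := by
  rcases le_total t v with htv | hvt
  · exact integral_indicator_Ioo_comm f huv htv
  rw [Ioo_eq_empty hvt.not_gt, indicator_empty, integral_zero]
  refine (integral_zero_ae (ae_of_all _ fun x hx => indicator_of_notMem ?_ _)).symm
  rw [uIoc_of_ge hvt] at hx
  exact fun h => h.2.not_gt hx.1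

theorem integral_nonneg_of_forall_Ioo {f : ℝ → ℝ} {a b : ℝ} (hab : a ≤ b)
    (hf : ∀ x ∈ Ioo a b, 0 ≤ f x) : 0 ≤ ∫ x in a..b, f x := by
  rw [integral_of_le hab, integral_Ioc_eq_integral_Ioo]
  exact setIntegral_nonneg measurableSet_Ioo hf

theorem integral_nonpos_of_forall_Ioo {f : ℝ → ℝ} {a b : ℝ} (hab : a ≤ b)
    (hf : ∀ x ∈ Ioo a b, f x ≤ 0) : ∫ x in a..b, f x ≤ 0 := by
  rw [integral_of_le hab, integral_Ioc_eq_integral_Ioo]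
  exact setIntegral_nonpos measurableSet_Ioo hf

end intervalIntegral

noncomputable def SDensity (p ξ x : ℝ) : ℝ :=
  (Ioo ξ (ξ + 2 / p)).indicator (sinSqWeight p ξ) x -
    (Ioo (ξ + 1 - 4 / p) (ξ + 1 - 2 / p)).indicator (sinSqWeight p (ξ + 1)) x

theorem S_eq_integral_add_integral {p ξ : ℝ} {n : ℕ} (hp : 0 < p)
    (hcos : cos (p / 2 * π * (ξ - n)) = 1) (t : ℝ) :
    S p n ξ t = (∫ x in ξ..t, (Ioo ξ (ξ + 2 / p)).indicator (sinSqWeight p ξ) x) +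
      ∫ x in t..(ξ + 1 - 2 / p),
        (Ioo (ξ + 1 - 4 / p) (ξ + 1 - 2 / p)).indicator (sinSqWeight p (ξ + 1)) x := by
  have hA : sinSqWeight p n = sinSqWeight p ξ := by
    simpa using sinSqWeight_eq_of_cos_eq_one hcos 0
  have h2p : 0 < 2 / p := by positivity
  have h4p : 4 / p = 2 / p + 2 / p := by ring
  change (∫ x in ξ..(ξ + 2 / p), (Ioo ξ t).indicator (sinSqWeight p n) x) +
    ∫ x in (ξ + 1 - 4 / p)..(ξ + 1 - 2 / p),
      (Ioo t (ξ + 1 - 2 / p)).indicator (sinSqWeight p (n + 1)) x = _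
  rw [hA, sinSqWeight_eq_of_cos_eq_one hcos 1,
    intervalIntegral.integral_indicator_Ioo_left _ (by linarith),
    intervalIntegral.integral_indicator_Ioo_right _ (by linarith)]

theorem S_sub_S_eq_integral_SDensity {p ξ : ℝ} {n : ℕ} (hp : 0 < p) (hξ : 0 < ξ)
    (hpos : 0 < ξ + 1 - 4 / p) (hcos : cos (p / 2 * π * (ξ - n)) = 1) (t₁ t₂ : ℝ) :
    S p n ξ t₂ - S p n ξ t₁ = ∫ x in t₁..t₂, SDensity p ξ x := by
  have hF (a b : ℝ) := (integrable_indicator_Ioo_sinSqWeight (p := p) (c := ξ) hξ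
    (ξ + 2 / p)).intervalIntegrable (a := a) (b := b)
  have hG (a b : ℝ) := (integrable_indicator_Ioo_sinSqWeight (p := p) (c := ξ + 1) hpos
    (ξ + 1 - 2 / p)).intervalIntegrable (a := a) (b := b)
  unfold SDensity
  rw [S_eq_integral_add_integral hp hcos, S_eq_integral_add_integral hp hcos,
    intervalIntegral.integral_sub (hF _ _) (hG _ _),
    ← intervalIntegral.integral_add_adjacent_intervals (hF ξ t₁) (hF t₁ t₂),
    ← intervalIntegral.integral_add_adjacent_intervals (hG t₁ t₂) (hG t₂ (ξ + 1 - 2 / p))]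
  ring

section SDensity

variable {p ξ x : ℝ}

theorem SDensity_nonpos (hp2 : 2 ≤ p) (hp4 : p ≤ 4)
    (hx : x ∈ Ioo (ξ + 1 - 4 / p) (ξ + 1 / 2 - 1 / p)) : SDensity p ξ x ≤ 0 := by
  have h14 : 1 / 4 ≤ 1 / p := one_div_le_one_div_of_le (by linarith) hp4
  have h12 : 1 / p ≤ 1 / 2 := one_div_le_one_div_of_le (by norm_num) hp2
  have hq : 2 / p = 2 * (1 / p) ∧ 4 / p = 4 * (1 / p) := ⟨by ring, by ring⟩
  have hxG : x ∈ Ioo (ξ + 1 - 4 / p) (ξ + 1 - 2 / p) := ⟨hx.1, by linarith [hx.2]⟩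
  rw [SDensity, indicator_of_mem hxG, sub_nonpos]
  by_cases hξx : ξ < x
  · rw [indicator_of_mem (show x ∈ Ioo ξ (ξ + 2 / p) from ⟨hξx, by linarith [hx.2]⟩)]
    exact sinSqWeight_le_sinSqWeight_add_one hp2 hp4 hξx.le hx.2.le
  · rw [indicator_of_notMem fun h => hξx h.1]
    exact div_nonneg (sq_nonneg _) (by positivity)

theorem SDensity_nonneg (hp2 : 2 ≤ p) (hp4 : p ≤ 4)
    (hx : x ∈ Ioo (ξ + 1 / 2 - 1 / p) (ξ + 2 / p)) : 0 ≤ SDensity p ξ x := by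
  have h14 : 1 / 4 ≤ 1 / p := one_div_le_one_div_of_le (by linarith) hp4
  have h12 : 1 / p ≤ 1 / 2 := one_div_le_one_div_of_le (by norm_num) hp2
  have hq : 2 / p = 2 * (1 / p) ∧ 4 / p = 4 * (1 / p) := ⟨by ring, by ring⟩
  have hxF : x ∈ Ioo ξ (ξ + 2 / p) := ⟨by linarith [hx.1], hx.2⟩
  rw [SDensity, indicator_of_mem hxF, sub_nonneg]
  by_cases hxb : x < ξ + 1 - 2 / p
  · have hxG : x ∈ Ioo (ξ + 1 - 4 / p) (ξ + 1 - 2 / p) :=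
      ⟨by linarith [hx.1], hxb⟩
    rw [indicator_of_mem hxG]
    exact sinSqWeight_add_one_le_sinSqWeight hp2 hp4 hx.1.le hxb.le
  · rw [indicator_of_notMem fun h => hxb h.2]
    exact div_nonneg (sq_nonneg _) (by positivity)

theorem SDensity_eq_zero (hp : 0 < p) (hp4 : p ≤ 4) (hx : ξ + 2 / p ≤ x) :
    SDensity p ξ x = 0 := by
  have h4p : 1 ≤ 4 / p := (le_div_iff₀ hp).2 (by linarith)
  have hle : ξ + 1 - 2 / p ≤ ξ + 2 / p := by
    linarith [show 4 / p = 2 / p + 2 / p by ring]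
  rw [SDensity, indicator_of_notMem fun h => h.2.not_ge hx,
    indicator_of_notMem fun h => h.2.not_ge (hle.trans hx), sub_zero]

end SDensity

theorem stmt10 (p : ℝ) (n : ℕ) (ξ : ℝ) (hp2 : 2 ≤ p) (hp4 : p ≤ 4)
    (hI : IntervalAtLevel p n ξ) (hpos : 0 < ξ + 1 - 4 / p) :
    (∀ t₁ t₂ : ℝ, ξ + 1 - 4 / p ≤ t₁ → t₁ ≤ t₂ → t₂ ≤ ξ + 1 / 2 - 1 / p →
      S p n ξ t₂ ≤ S p n ξ t₁) ∧
    (∀ t₁ t₂ : ℝ, ξ + 1 / 2 - 1 / p ≤ t₁ → t₁ ≤ t₂ → t₂ ≤ ξ + 2 / p →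
      S p n ξ t₁ ≤ S p n ξ t₂) ∧
    (∀ t₁ t₂ : ℝ, ξ + 2 / p ≤ t₁ → t₁ ≤ t₂ → t₂ ≤ ξ + 1 →
      S p n ξ t₁ = S p n ξ t₂) := by
  have hp : 0 < p := by linarith
  have hξ : 0 < ξ := by linarith [(le_div_iff₀ hp).2 (by linarith : 1 * p ≤ 4)]
  have hS := S_sub_S_eq_integral_SDensity hp hξ hpos (hI.cos_eq_one hp)
  refine ⟨fun t₁ t₂ h₁ h₁₂ h₂ => ?_, fun t₁ t₂ h₁ h₁₂ h₂ => ?_, fun t₁ t₂ h₁ h₁₂ _ => ?_⟩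
  · have := intervalIntegral.integral_nonpos_of_forall_Ioo h₁₂ fun x hx =>
      SDensity_nonpos hp2 hp4 ⟨h₁.trans_lt hx.1, hx.2.trans_le h₂⟩
    linarith [hS t₁ t₂]
  · have := intervalIntegral.integral_nonneg_of_forall_Ioo h₁₂ fun x hx =>
      SDensity_nonneg hp2 hp4 ⟨h₁.trans_lt hx.1, hx.2.trans_le h₂⟩
    linarith [hS t₁ t₂]
  · have := intervalIntegral.integral_zero_ae <| ae_of_all volume fun x hx =>
      SDensity_eq_zero hp hp4 (h₁.trans (uIoc_of_le h₁₂ ▸ hx).1.le)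
    linarith [hS t₁ t₂]
end

section
/- Let 4 ≤ p ≤ 6, let (ξ, ξ+2/p) be an interval at level n with ξ > 0, set m_ξ = ξ + 1/2 − 1/p, and let t satisfy ξ ≤ t ≤ ξ + 4/p. Then S(t) ≤ S(m_ξ), i.e. S is maximized at t = m_ξ. -/
open MeasureTheory Real Set

/-!
Write `S t` as the integral over `ℝ` of
`f₀ · 1_(ξ, min t (ξ + 2/p)) + f₁ · 1_(max t (ξ + 1 - 4/p), ξ + 1 - 2/p)`,
where `fⱼ` is the integrand at level `n + j`. Since `p (ξ - n)` is an even integer,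
`f₁ - f₀ = sin (p π (x - m)) sin (p π / 2) / (π² x²)` with `m = ξ + 1/2 - 1/p`. For
`4 ≤ p ≤ 6` this gives `f₁ ≤ f₀` on `[m - 1/p, m]` and `f₀ ≤ f₁` on `[m, m + 1/p]`, and the
integration ranges overlap inside `[m - 1/p, m + 1/p]`. So moving `t` to `m` trades `f₁` for
`f₀` left of `m` and `f₀` for `f₁` right of `m`, which increases the integrand at every `x ≠ m`.
-/
lemma left_notMem_of_connectedComponentIn_eq_Ioo {U : Set ℝ} {x a b : ℝ} (hx : x ∈ U)
    (h : connectedComponentIn U x = Ioo a b) : a ∉ U := by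
  intro ha
  have hxab : x ∈ Ioo a b := h ▸ mem_connectedComponentIn hx
  have hIco : Ico a b ⊆ U := by
    rintro y ⟨hay, hyb⟩
    rcases hay.eq_or_lt with rfl | hay
    · exact ha
    · exact connectedComponentIn_subset U x (h ▸ ⟨hay, hyb⟩)
  have hsub := isPreconnected_Ico.subset_connectedComponentIn ⟨hxab.1.le, hxab.2⟩ hIco
  rw [h] at hsub
  exact lt_irrefl a (hsub ⟨le_rfl, hxab.1.trans hxab.2⟩).1

lemma apply_eq_zero_of_connectedComponentIn_eq_Ioo {f : ℝ → ℝ} (hf : Continuous f) {x a b : ℝ}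
    (hx : x ∈ {y | 0 < f y}) (h : connectedComponentIn {y | 0 < f y} x = Ioo a b) :
    f a = 0 := by
  have hab : a < b := by
    have hxab : x ∈ Ioo a b := h ▸ mem_connectedComponentIn hx
    exact hxab.1.trans hxab.2
  have hnonneg : Icc a b ⊆ {y | 0 ≤ f y} := by
    rw [← closure_Ioo hab.ne, ← h]
    refine closure_minimal (fun y hy => ?_) (isClosed_le continuous_const hf)
    exact le_of_lt (show 0 < f y from connectedComponentIn_subset {y | 0 < f y} x hy)
  have ha : a ∉ {y | 0 < f y} := left_notMem_of_connectedComponentIn_eq_Ioo hx h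
  exact le_antisymm (not_lt.mp ha) (hnonneg ⟨le_rfl, hab.le⟩)

lemma IntervalAtLevel.exists_int {p : ℝ} {n : ℕ} {ξ : ℝ} (hI : IntervalAtLevel p n ξ) :
    ∃ k : ℤ, p * (ξ - n) = 2 * k := by
  obtain ⟨x, hx, hc⟩ := hI
  have hsin := apply_eq_zero_of_connectedComponentIn_eq_Ioo
    (f := fun y => sin (p / 2 * π * (y - n))) (by fun_prop) hx hc
  obtain ⟨k, hk⟩ := Real.sin_eq_zero_iff.mp hsin
  exact ⟨k, mul_right_cancel₀ Real.pi_ne_zero (by linear_combination (-2 : ℝ) * hk)⟩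

lemma sin_sq_sub_sin_sq (x y : ℝ) : sin x ^ 2 - sin y ^ 2 = sin (x + y) * sin (x - y) := by
  rw [sin_add, sin_sub]
  nlinarith [sin_sq_add_cos_sq x, sin_sq_add_cos_sq y]

noncomputable def levelIntegrand (p c y : ℝ) : ℝ := sin (p / 2 * π * (y - c)) ^ 2 / (π ^ 2 * y ^ 2)

section Crossing

variable {p c ξ x : ℝ} {k : ℤ}

lemma sin_sq_succ_sub_sin_sq (hp : p ≠ 0) (hk : p * (ξ - c) = 2 * k) :
    sin (p / 2 * π * (x - (c + 1))) ^ 2 - sin (p / 2 * π * (x - c)) ^ 2 =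
      sin (p * π * (x - (ξ + 1 / 2 - 1 / p))) * sin (p * π / 2) := by
  have hsum : p / 2 * π * (x - (c + 1)) + p / 2 * π * (x - c) =
      p * π * (x - (ξ + 1 / 2 - 1 / p)) - π + k * (2 * π) := by
    have hp1 : p * (1 / p) = 1 := by field_simp
    linear_combination π * hk - π * hp1
  have hdiff : p / 2 * π * (x - (c + 1)) - p / 2 * π * (x - c) = -(p * π / 2) := by ring
  rw [sin_sq_sub_sin_sq, hsum, hdiff, sin_add_int_mul_two_pi, sin_sub_pi, sin_neg]
  ring

lemma levelIntegrand_succ_sub (hp : p ≠ 0) (hk : p * (ξ - c) = 2 * k) :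
    levelIntegrand p (c + 1) x - levelIntegrand p c x =
      sin (p * π * (x - (ξ + 1 / 2 - 1 / p))) * sin (p * π / 2) / (π ^ 2 * x ^ 2) := by
  rw [levelIntegrand, levelIntegrand, ← sub_div, sin_sq_succ_sub_sin_sq hp hk]

lemma sin_mul_pi_div_two_nonneg (hp4 : 4 ≤ p) (hp6 : p ≤ 6) : 0 ≤ sin (p * π / 2) := by
  rw [← sin_sub_two_pi]
  apply sin_nonneg_of_nonneg_of_le_pi <;> nlinarith [pi_pos]

lemma levelIntegrand_succ_le (hp : 0 < p) (hs : 0 ≤ sin (p * π / 2))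
    (hk : p * (ξ - c) = 2 * k) (hx : x ∈ Icc (ξ + 1 / 2 - 1 / p - 1 / p) (ξ + 1 / 2 - 1 / p)) :
    levelIntegrand p (c + 1) x ≤ levelIntegrand p c x := by
  have hlow : -1 ≤ p * (x - (ξ + 1 / 2 - 1 / p)) := by
    have h := mul_le_mul_of_nonneg_left (show -(1 / p) ≤ x - (ξ + 1 / 2 - 1 / p) by
      linarith [hx.1]) hp.le
    rwa [mul_neg, mul_one_div_cancel hp.ne'] at h
  have hup : p * (x - (ξ + 1 / 2 - 1 / p)) ≤ 0 :=
    mul_nonpos_of_nonneg_of_nonpos hp.le (by linarith [hx.2])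
  have hsin : sin (p * π * (x - (ξ + 1 / 2 - 1 / p))) ≤ 0 :=
    sin_nonpos_of_nonpos_of_neg_pi_le (by nlinarith [pi_pos]) (by nlinarith [pi_pos])
  rw [← sub_nonpos, levelIntegrand_succ_sub hp.ne' hk]
  exact div_nonpos_of_nonpos_of_nonneg (mul_nonpos_of_nonpos_of_nonneg hsin hs) (by positivity)

lemma levelIntegrand_le_succ (hp : 0 < p) (hs : 0 ≤ sin (p * π / 2))
    (hk : p * (ξ - c) = 2 * k) (hx : x ∈ Icc (ξ + 1 / 2 - 1 / p) (ξ + 1 / 2 - 1 / p + 1 / p)) :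
    levelIntegrand p c x ≤ levelIntegrand p (c + 1) x := by
  have hlow : 0 ≤ p * (x - (ξ + 1 / 2 - 1 / p)) := mul_nonneg hp.le (by linarith [hx.1])
  have hup : p * (x - (ξ + 1 / 2 - 1 / p)) ≤ 1 := by
    have h := mul_le_mul_of_nonneg_left (show x - (ξ + 1 / 2 - 1 / p) ≤ 1 / p by
      linarith [hx.2]) hp.le
    rwa [mul_one_div_cancel hp.ne'] at h
  have hsin : 0 ≤ sin (p * π * (x - (ξ + 1 / 2 - 1 / p))) :=
    sin_nonneg_of_nonneg_of_le_pi (by nlinarith [pi_pos]) (by nlinarith [pi_pos])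
  rw [← sub_nonneg, levelIntegrand_succ_sub hp.ne' hk]
  exact div_nonneg (mul_nonneg hsin hs) (by positivity)

end Crossing

lemma indicator_add_indicator_le_of_crossing {f g : ℝ → ℝ} {a b c d m t x : ℝ}
    (hf : ∀ y, 0 ≤ f y) (hg : ∀ y, 0 ≤ g y)
    (hgf : ∀ y ∈ Ioo c m, g y ≤ f y) (hfg : ∀ y ∈ Ioo m b, f y ≤ g y)
    (hac : a ≤ c) (hcm : c ≤ m) (hmb : m ≤ b) (hbd : b ≤ d) (hxm : x ≠ m) :
    (Ioo a b ∩ Ioo a t).indicator f x + (Ioo c d ∩ Ioo t d).indicator g x ≤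
      (Ioo a b ∩ Ioo a m).indicator f x + (Ioo c d ∩ Ioo m d).indicator g x := by
  simp only [indicator_apply, mem_inter_iff, mem_Ioo]
  split_ifs <;> grind

lemma continuousOn_levelIntegrand (p c : ℝ) : ContinuousOn (levelIntegrand p c) {0}ᶜ :=
  ContinuousOn.div (by fun_prop) (by fun_prop) fun y hy => by
    have : y ≠ 0 := hy
    positivity

lemma integrable_indicator_levelIntegrand {p c a b : ℝ} {s : Set ℝ} (ha : 0 < a)
    (hs : MeasurableSet s) : Integrable ((Ioo a b ∩ s).indicator (levelIntegrand p c)) := by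
  rw [integrable_indicator_iff (measurableSet_Ioo.inter hs)]
  have hIcc : Icc a b ⊆ {0}ᶜ := fun y hy => (ha.trans_le hy.1).ne'
  exact ((continuousOn_levelIntegrand p c).mono hIcc).integrableOn_Icc.mono_set
    (inter_subset_left.trans Ioo_subset_Icc_self)

lemma intervalIntegral_indicator_eq_integral {f : ℝ → ℝ} {a b : ℝ} (hab : a ≤ b) (s : Set ℝ) :
    ∫ x in a..b, s.indicator f x = ∫ x, (Ioo a b ∩ s).indicator f x := by
  rw [intervalIntegral.integral_of_le hab, integral_Ioc_eq_integral_Ioo,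
    ← integral_indicator measurableSet_Ioo, indicator_indicator]

noncomputable def sIntegrand (p : ℝ) (n : ℕ) (ξ t : ℝ) : ℝ → ℝ :=
  (Ioo ξ (ξ + 2 / p) ∩ Ioo ξ t).indicator (levelIntegrand p n) +
    (Ioo (ξ + 1 - 4 / p) (ξ + 1 - 2 / p) ∩ Ioo t (ξ + 1 - 2 / p)).indicator
      (levelIntegrand p (n + 1))

section sIntegrand

variable {p : ℝ} {n : ℕ} {ξ : ℝ}

lemma integrable_sIntegrand (hp4 : 4 ≤ p) (hξ : 0 < ξ) (t : ℝ) :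
    Integrable (sIntegrand p n ξ t) := by
  have h4 : 4 / p ≤ 1 := (div_le_one (by linarith)).mpr hp4
  exact (integrable_indicator_levelIntegrand hξ measurableSet_Ioo).add
    (integrable_indicator_levelIntegrand (by linarith) measurableSet_Ioo)

lemma S_eq_integral_sIntegrand (hp4 : 4 ≤ p) (hξ : 0 < ξ) (t : ℝ) :
    S p n ξ t = ∫ x, sIntegrand p n ξ t x := by
  have hp : 0 < p := by linarith
  have h2 : 0 ≤ 2 / p := by positivity
  have h24 : 2 / p ≤ 4 / p := div_le_div_of_nonneg_right (by norm_num) hp.le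
  have h41 : 4 / p ≤ 1 := (div_le_one hp).mpr hp4
  simp only [sIntegrand, Pi.add_apply]
  rw [integral_add (integrable_indicator_levelIntegrand hξ measurableSet_Ioo)
    (integrable_indicator_levelIntegrand (by linarith) measurableSet_Ioo),
    ← intervalIntegral_indicator_eq_integral (by linarith),
    ← intervalIntegral_indicator_eq_integral (by linarith)]
  rfl

lemma sIntegrand_le_sIntegrand_mid (hp4 : 4 ≤ p) (hp6 : p ≤ 6) {k : ℤ}
    (hk : p * (ξ - n) = 2 * k) (t : ℝ) {x : ℝ} (hx : x ≠ ξ + 1 / 2 - 1 / p) :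
    sIntegrand p n ξ t x ≤ sIntegrand p n ξ (ξ + 1 / 2 - 1 / p) x := by
  have hp : 0 < p := by linarith
  have hs := sin_mul_pi_div_two_nonneg hp4 hp6
  have hq4 : 1 / p ≤ 1 / 4 := one_div_le_one_div_of_le (by norm_num) hp4
  have hq6 : 1 / 6 ≤ 1 / p := one_div_le_one_div_of_le hp hp6
  have e2 : 2 / p = 2 * (1 / p) := by ring
  have e4 : 4 / p = 4 * (1 / p) := by ring
  refine indicator_add_indicator_le_of_crossing (fun y => by unfold levelIntegrand; positivity)
    (fun y => by unfold levelIntegrand; positivity)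
    (fun y hy => levelIntegrand_succ_le hp hs hk ⟨by linarith [hy.1], hy.2.le⟩)
    (fun y hy => levelIntegrand_le_succ hp hs hk ⟨hy.1.le, by linarith [hy.2]⟩)
    (by linarith) (by linarith) (by linarith) (by linarith) hx

end sIntegrand

theorem stmt14_general (p : ℝ) (n : ℕ) (ξ t : ℝ) (hp4 : 4 ≤ p) (hp6 : p ≤ 6)
    (hI : IntervalAtLevel p n ξ) (hξ : 0 < ξ) :
    S p n ξ t ≤ S p n ξ (ξ + 1 / 2 - 1 / p) := by
  obtain ⟨k, hk⟩ := hI.exists_int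
  rw [S_eq_integral_sIntegrand hp4 hξ, S_eq_integral_sIntegrand hp4 hξ]
  refine integral_mono_ae (integrable_sIntegrand hp4 hξ t) (integrable_sIntegrand hp4 hξ _) ?_
  filter_upwards [volume.ae_ne (ξ + 1 / 2 - 1 / p)] with x hx
  exact sIntegrand_le_sIntegrand_mid hp4 hp6 hk t hx

theorem stmt14 (p : ℝ) (n : ℕ) (ξ t : ℝ) (hp4 : 4 ≤ p) (hp6 : p ≤ 6)
    (hI : IntervalAtLevel p n ξ) (hξ : 0 < ξ)
    (ht1 : ξ ≤ t) (ht2 : t ≤ ξ + 4 / p) :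
    S p n ξ t ≤ S p n ξ (ξ + 1 / 2 - 1 / p) :=
  stmt14_general p n ξ t hp4 hp6 hI hξ
end
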